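/- arXiv:1108.6263 — 8 statements merged into one kernel-verified Lean document; each statement's English description precedes it below -/
import Mathlib

section
/- For a finitary multiple-conclusion deductive system, the general cut condition (if Γ∪Π ⊢ Λ∪Δ for every partition Π∪Λ = Ξ of an arbitrary set Ξ, then Γ ⊢ Δ) is equivalent to the single-formula cut rule: if Γ∪{φ} ⊢ Δ and Γ ⊢ {φ}∪Δ, then Γ ⊢ Δ. -/
/-- A multiple-conclusion consequence relation (reflexivity and monotonicity only;
the cut conditions are discussed separately). -/
structure MCConsequence (F : Type*) where
  Thm : Set F → Set F → Prop
  refl : ∀ φ : F, Thm {φ} {φ}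
  mono : ∀ {Γ Γ' Δ Δ' : Set F}, Thm Γ Δ → Γ ⊆ Γ' → Δ ⊆ Δ' → Thm Γ' Δ'

/-- Finitarity for multiple-conclusion systems. -/
def MCConsequence.Finitary {F : Type*} (L : MCConsequence F) : Prop :=
  ∀ (Γ Δ : Set F), L.Thm Γ Δ →
    ∃ Γ' ⊆ Γ, ∃ Δ' ⊆ Δ, Γ'.Finite ∧ Δ'.Finite ∧ L.Thm Γ' Δ'

/-- The general cut condition: if `Γ ∪ Π ⊢ Λ ∪ Δ` for every partition `Π ∪ Λ = Ξ`,
then `Γ ⊢ Δ`. -/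
def MCConsequence.GeneralCut {F : Type*} (L : MCConsequence F) : Prop :=
  ∀ (Γ Δ Ξ : Set F),
    (∀ P Q : Set F, P ∪ Q = Ξ → L.Thm (Γ ∪ P) (Q ∪ Δ)) → L.Thm Γ Δ

/-- The single-formula cut rule. -/
def MCConsequence.SingleCut {F : Type*} (L : MCConsequence F) : Prop :=
  ∀ (Γ Δ : Set F) (φ : F), L.Thm (Γ ∪ {φ}) Δ → L.Thm Γ ({φ} ∪ Δ) → L.Thm Γ Δ


/-! Single cut is general cut with `Ξ = {φ}`. Conversely, by finitarity underivability of
sequents has finite character, so by the Teichmüller–Tukey lemma an underivable `Γ ⊢ Δ` extends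
to a maximal underivable `A ⊢ B`; single cut forces every formula into `A` or `B`. The partition
`Ξ ∩ A`, `Ξ \ A` of `Ξ` then gives a derivable sequent that weakens to `A ⊢ B`. -/

namespace MCConsequence

variable {F : Type*} (L : MCConsequence F)

/-- Sequents `A ⊢ B` are encoded as subsets of `F ⊕ F`: `Sum.inl` tags `A`, `Sum.inr` tags `B`. -/
def underivable : Set (Set (F ⊕ F)) :=
  {X | ¬ L.Thm (Sum.inl ⁻¹' X) (Sum.inr ⁻¹' X)}

variable {L}

theorem image_union_mem_underivable_iff {Γ Δ : Set F} :
    Sum.inl '' Γ ∪ Sum.inr '' Δ ∈ L.underivable ↔ ¬ L.Thm Γ Δ := by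
  simp [underivable, Set.preimage_union, Set.preimage_image_eq _ Sum.inl_injective,
    Set.preimage_image_eq _ Sum.inr_injective]

theorem singleCut_of_generalCut (h : L.GeneralCut) : L.SingleCut := by
  intro Γ Δ φ hleft hright
  refine h Γ Δ {φ} fun P Q hPQ => ?_
  by_cases hφ : φ ∈ P
  · exact L.mono hleft (Set.union_subset_union_right Γ (Set.singleton_subset_iff.2 hφ))
      Set.subset_union_right
  · have hφQ : φ ∈ Q := ((Set.ext_iff.1 hPQ φ).2 rfl).resolve_left hφ
    exact L.mono hright Set.subset_union_left
      (Set.union_subset_union_left Δ (Set.singleton_subset_iff.2 hφQ))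

theorem Finitary.isOfFiniteCharacter_underivable (hfin : L.Finitary) :
    Order.IsOfFiniteCharacter L.underivable := by
  refine fun X => ⟨fun hX Y hYX _ hY => hX (L.mono hY (Set.preimage_mono hYX)
    (Set.preimage_mono hYX)), fun hfinite hX => ?_⟩
  obtain ⟨Γ, hΓ, Δ, hΔ, hΓfin, hΔfin, hΓΔ⟩ := hfin _ _ hX
  have hsub : Sum.inl '' Γ ∪ Sum.inr '' Δ ⊆ X :=
    Set.union_subset (Set.image_subset_iff.2 hΓ) (Set.image_subset_iff.2 hΔ)
  exact image_union_mem_underivable_iff.1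
    (hfinite _ hsub ((hΓfin.image _).union (hΔfin.image _))) hΓΔ

theorem SingleCut.mem_or_mem_of_maximal (hsc : L.SingleCut) {X : Set (F ⊕ F)}
    (hX : Maximal (· ∈ L.underivable) X) (φ : F) : Sum.inl φ ∈ X ∨ Sum.inr φ ∈ X := by
  by_contra! hφ
  have hleft : L.Thm (Sum.inl ⁻¹' X ∪ {φ}) (Sum.inr ⁻¹' X) := by
    by_contra h
    refine hφ.1 (hX.mem_of_prop_insert ?_)
    convert h using 2 <;> ext <;> simp
  have hright : L.Thm (Sum.inl ⁻¹' X) ({φ} ∪ Sum.inr ⁻¹' X) := by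
    by_contra h
    refine hφ.2 (hX.mem_of_prop_insert ?_)
    convert h using 2 <;> ext <;> simp
  exact hX.prop (hsc _ _ φ hleft hright)

theorem Finitary.exists_complete_extension (hfin : L.Finitary) (hsc : L.SingleCut) {Γ Δ : Set F}
    (hΓΔ : ¬ L.Thm Γ Δ) :
    ∃ A B : Set F, Γ ⊆ A ∧ Δ ⊆ B ∧ (∀ φ, φ ∈ A ∨ φ ∈ B) ∧ ¬ L.Thm A B := by
  obtain ⟨X, hsub, hX⟩ := hfin.isOfFiniteCharacter_underivable.exists_maximal
    (image_union_mem_underivable_iff.2 hΓΔ)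
  refine ⟨Sum.inl ⁻¹' X, Sum.inr ⁻¹' X, ?_, ?_, hsc.mem_or_mem_of_maximal hX, hX.prop⟩
  · exact fun φ hφ => hsub (Or.inl ⟨φ, hφ, rfl⟩)
  · exact fun φ hφ => hsub (Or.inr ⟨φ, hφ, rfl⟩)

end MCConsequence

/-- For a finitary multiple-conclusion deductive system, the general cut condition is
equivalent to the single-formula cut rule. -/
theorem generalCut_iff_singleCut {F : Type*} (L : MCConsequence F)
    (hfin : L.Finitary) : L.GeneralCut ↔ L.SingleCut := by
  refine ⟨MCConsequence.singleCut_of_generalCut, fun hsc Γ Δ Ξ h => ?_⟩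
  by_contra hΓΔ
  obtain ⟨A, B, hΓA, hΔB, hcomplete, hAB⟩ := hfin.exists_complete_extension hsc hΓΔ
  have hsplit := h (Ξ ∩ A) (Ξ \ A) (Set.inter_union_sdiff Ξ A)
  refine hAB (L.mono hsplit (Set.union_subset hΓA Set.inter_subset_right) ?_)
  exact Set.union_subset (fun φ hφ => (hcomplete φ).resolve_left hφ.2) hΔB
end

section
/- For every finitary consistent multiple-conclusion deductive system L = (F, ⊢) over a countable set of formulas F, there exists a conservative translation f : L →c CPC_m into the multiple-conclusion classical propositional consequence relation. -/
/-- Formulas of classical propositional logic over countably many variables. -/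
inductive PropForm : Type
  | var : ℕ → PropForm
  | bot : PropForm
  | top : PropForm
  | neg : PropForm → PropForm
  | and : PropForm → PropForm → PropForm
  | or : PropForm → PropForm → PropForm
  | imp : PropForm → PropForm → PropForm

/-- Boolean evaluation of a formula under a valuation. -/
def PropForm.eval (v : ℕ → Bool) : PropForm → Bool
  | .var n => v n
  | .bot => false
  | .top => true
  | .neg φ => !(φ.eval v)
  | .and φ ψ => φ.eval v && ψ.eval v
  | .or φ ψ => φ.eval v || ψ.eval v
  | .imp φ ψ => !(φ.eval v) || ψ.eval v

/-- Multiple-conclusion classical consequence `CPC_m`. -/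
def CpcM (Γ Δ : Set PropForm) : Prop :=
  ∀ v : ℕ → Bool, (∀ φ ∈ Γ, φ.eval v = true) → ∃ ψ ∈ Δ, ψ.eval v = true

/-- A multiple-conclusion deductive system, with the general cut rule. -/
structure MCSystem (F : Type*) where
  Thm : Set F → Set F → Prop
  refl : ∀ φ : F, Thm {φ} {φ}
  mono : ∀ {Γ Γ' Δ Δ' : Set F}, Thm Γ Δ → Γ ⊆ Γ' → Δ ⊆ Δ' → Thm Γ' Δ'
  cut : ∀ (Γ Δ Ξ : Set F),
    (∀ P Q : Set F, P ∪ Q = Ξ → Thm (Γ ∪ P) (Q ∪ Δ)) → Thm Γ Δ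

/-- Finitarity for multiple-conclusion systems. -/
def MCSystem.Finitary {F : Type*} (L : MCSystem F) : Prop :=
  ∀ (Γ Δ : Set F), L.Thm Γ Δ →
    ∃ Γ' ⊆ Γ, ∃ Δ' ⊆ Δ, Γ'.Finite ∧ Δ'.Finite ∧ L.Thm Γ' Δ'

/-- Consistency: `∅ ⊬ ∅`. -/
def MCSystem.Consistent {F : Type*} (L : MCSystem F) : Prop :=
  ¬ L.Thm ∅ ∅

/-!
Call `χ : F → Bool` a valuation of `L` when `{χ = true} ⊬ {χ = false}`. The cut rule with
`Ξ = F` makes `L` complete for its valuations, finitarity makes them a closed subset of the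
Cantor space `F → Bool`, and consistency makes it nonempty. Along an enumeration `g` of `F` this
closed set becomes the range of a 1-Lipschitz retraction of `ℕ → Bool`; coordinate `n` of such a
map depends only on the first `n + 1` bits, so it is computed by a classical formula `ψ n`, and
`ψ ∘ g` maps the classical valuations onto exactly the valuations of `L`.
-/

theorem PropForm.exists_eval_eq_of_dependsOn_lt (k : ℕ) (h : (ℕ → Bool) → Bool)
    (hh : ∀ v w : ℕ → Bool, (∀ i < k, v i = w i) → h v = h w) :
    ∃ φ : PropForm, ∀ v, φ.eval v = h v := by
  induction k generalizing h with
  | zero =>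
    refine ⟨if h (fun _ => false) then .top else .bot, fun v => ?_⟩
    rw [hh v (fun _ => false) (by simp)]
    split_ifs with hb <;> simp [PropForm.eval, hb]
  | succ k ih =>
    have h_update (b : Bool) :
        ∃ φ : PropForm, ∀ v, φ.eval v = h (Function.update v k b) :=
      ih _ fun v w hvw => hh _ _ fun i hi => by
        rcases eq_or_ne i k with rfl | hik
        · simp
        · simp only [Function.update_of_ne hik]; exact hvw i (by omega)
    obtain ⟨φ₀, hφ₀⟩ := h_update false
    obtain ⟨φ₁, hφ₁⟩ := h_update true
    -- Shannon expansion on the variable `k`.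
    refine ⟨.or (.and (.var k) φ₁) (.and (.neg (.var k)) φ₀), fun v => ?_⟩
    have hv : h v = h (Function.update v k (v k)) := by rw [Function.update_eq_self]
    cases hk : v k <;> simp [PropForm.eval, hφ₀, hφ₁, hv, hk]

theorem CpcM_image_iff {F : Type*} (f : F → PropForm) (Γ Δ : Set F) :
    CpcM (f '' Γ) (f '' Δ) ↔
      ∀ v, (∀ φ ∈ Γ, (f φ).eval v = true) → ∃ ψ ∈ Δ, (f ψ).eval v = true := by
  simp only [CpcM, Set.forall_mem_image, Set.exists_mem_image]

namespace PiNat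

attribute [local instance] PiNat.metricSpace

variable {E : ℕ → Type*} [∀ n, TopologicalSpace (E n)] [∀ n, DiscreteTopology (E n)]

theorem mem_cylinder_of_lipschitzWith_one {r : (∀ n, E n) → ∀ n, E n} (hr : LipschitzWith 1 r)
    {x y : ∀ n, E n} {n : ℕ} (hxy : y ∈ cylinder x n) : r y ∈ cylinder (r x) n := by
  rw [mem_cylinder_iff_dist_le] at hxy ⊢
  calc dist (r y) (r x) ≤ 1 * dist y x := hr.dist_le_mul y x
    _ ≤ (1 / 2) ^ n := by rwa [one_mul]

end PiNat

open PiNat in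
theorem exists_formulas_range_eq_of_isClosed {S : Set (ℕ → Bool)} (hS : IsClosed S)
    (hne : S.Nonempty) :
    ∃ ψ : ℕ → PropForm, Set.range (fun v n => (ψ n).eval v) = S := by
  let _ : MetricSpace (ℕ → Bool) := PiNat.metricSpace
  obtain ⟨r, -, hr_range, hr⟩ := exists_lipschitz_retraction_of_isClosed hS hne
  have hr_dependsOn (n : ℕ) (v w : ℕ → Bool) (hvw : ∀ i < n + 1, v i = w i) : r v n = r w n :=
    mem_cylinder_iff.1 (mem_cylinder_of_lipschitzWith_one hr (mem_cylinder_iff.2 hvw)) n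
      n.lt_succ_self
  choose ψ hψ using fun n =>
    PropForm.exists_eval_eq_of_dependsOn_lt (n + 1) (fun v => r v n) (hr_dependsOn n)
  exact ⟨ψ, by simpa only [hψ] using hr_range⟩

namespace MCSystem

variable {F : Type*} (L : MCSystem F)

def IsValuation (χ : F → Bool) : Prop :=
  ¬ L.Thm {φ | χ φ = true} {φ | χ φ = false}

theorem thm_iff_forall_isValuation (Γ Δ : Set F) :
    L.Thm Γ Δ ↔ ∀ χ, L.IsValuation χ → (∀ φ ∈ Γ, χ φ = true) → ∃ ψ ∈ Δ, χ ψ = true := by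
  classical
  refine ⟨fun h χ hχ hΓ => ?_, fun h => ?_⟩
  · by_contra! hΔ
    exact hχ (L.mono h hΓ fun ψ hψ => by simpa using hΔ ψ hψ)
  · by_contra hΓΔ
    obtain ⟨P, Q, hPQ, hPQ_not⟩ : ∃ P Q : Set F, P ∪ Q = Set.univ ∧ ¬ L.Thm (Γ ∪ P) (Q ∪ Δ) := by
      by_contra! hall
      exact hΓΔ (L.cut Γ Δ Set.univ hall)
    have hQ : (Γ ∪ P)ᶜ ⊆ Q := fun φ hφ =>
      (hPQ ▸ Set.mem_univ φ : φ ∈ P ∪ Q).resolve_left fun hP => hφ (.inr hP)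
    obtain ⟨ψ, hψΔ, hψ⟩ := h (fun φ => decide (φ ∈ Γ ∪ P))
      (fun hT => hPQ_not <| L.mono hT (fun φ => of_decide_eq_true)
        fun φ hφ => .inl (hQ (by simpa using hφ)))
      (fun φ hφ => by simp [hφ])
    exact hPQ_not (L.mono (L.refl ψ) (by simpa using hψ) (by simp [hψΔ]))

theorem exists_isValuation (hcons : L.Consistent) : ∃ χ, L.IsValuation χ := by
  by_contra! h
  exact hcons ((L.thm_iff_forall_isValuation ∅ ∅).2 fun χ hχ => absurd hχ (h χ))

theorem isClosed_setOf_isValuation (hfin : L.Finitary) : IsClosed {χ | L.IsValuation χ} := by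
  refine isOpen_compl_iff.1 (isOpen_iff_forall_mem_open.2 fun χ hχ => ?_)
  obtain ⟨Γ, hΓ, Δ, hΔ, hΓfin, hΔfin, hΓΔ⟩ := hfin _ _ (not_not.1 hχ)
  refine ⟨(Γ ∪ Δ).pi fun φ => {χ φ}, fun χ' hχ' hval => hval (L.mono hΓΔ ?_ ?_),
    isOpen_set_pi (hΓfin.union hΔfin) fun _ _ => isOpen_discrete _, fun _ _ => rfl⟩
  · exact fun φ hφ => (hχ' φ (.inl hφ)).trans (hΓ hφ)
  · exact fun φ hφ => (hχ' φ (.inr hφ)).trans (hΔ hφ)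

theorem thm_iff_cpcM_of_range_eq {f : F → PropForm}
    (hf : Set.range (fun v φ => (f φ).eval v) = {χ | L.IsValuation χ}) (Γ Δ : Set F) :
    L.Thm Γ Δ ↔ CpcM (f '' Γ) (f '' Δ) := by
  rw [thm_iff_forall_isValuation, CpcM_image_iff,
    ← Set.forall_mem_range (f := fun v φ => (f φ).eval v)
      (p := fun χ => (∀ φ ∈ Γ, χ φ = true) → ∃ ψ ∈ Δ, χ ψ = true), hf]
  rfl

end MCSystem

/-- Every finitary consistent multiple-conclusion deductive system over a countable set
of formulas has a conservative translation into multiple-conclusion classical logic. -/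
theorem conservative_translation_to_CpcM {F : Type} [Countable F]
    (L : MCSystem F) (hfin : L.Finitary) (hcons : L.Consistent) :
    ∃ f : F → PropForm, ∀ Γ Δ : Set F, L.Thm Γ Δ ↔ CpcM (f '' Γ) (f '' Δ) := by
  obtain ⟨g, hg⟩ := exists_injective_nat F
  have hg_surj : Function.Surjective fun x : ℕ → Bool => x ∘ g := hg.surjective_comp_right
  set S := (fun x : ℕ → Bool => x ∘ g) ⁻¹' {χ | L.IsValuation χ}
  have hS_closed : IsClosed S :=
    (L.isClosed_setOf_isValuation hfin).preimage (continuous_pi fun φ => continuous_apply (g φ))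
  have hS_nonempty : S.Nonempty := by
    obtain ⟨χ, hχ⟩ := L.exists_isValuation hcons
    obtain ⟨x, rfl⟩ := hg_surj χ
    exact ⟨x, hχ⟩
  obtain ⟨ψ, hψ⟩ := exists_formulas_range_eq_of_isClosed hS_closed hS_nonempty
  refine ⟨ψ ∘ g, L.thm_iff_cpcM_of_range_eq ?_⟩
  calc Set.range (fun v φ => (ψ (g φ)).eval v)
      = (fun x : ℕ → Bool => x ∘ g) '' Set.range (fun v n => (ψ n).eval v) := by
        rw [← Set.range_comp]; rfl
    _ = {χ | L.IsValuation χ} := by rw [hψ, Set.image_preimage_eq _ hg_surj]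
end

section
/- Every finitary deductive system over a countable set of formulas can be conservatively translated into classical propositional logic CPC; i.e., CPC is universal. -/
/-- Classical propositional consequence. -/
def Cpc (Γ : Set PropForm) (φ : PropForm) : Prop :=
  ∀ v : ℕ → Bool, (∀ ψ ∈ Γ, ψ.eval v = true) → φ.eval v = true

/-- A Tarski-style deductive system. -/
structure DeductiveSystem (F : Type*) where
  Thm : Set F → F → Prop
  refl : ∀ φ : F, Thm {φ} φ
  mono : ∀ {Γ Γ' : Set F} {φ : F}, Thm Γ φ → Γ ⊆ Γ' → Thm Γ' φ
  cut : ∀ {Γ Δ : Set F} {φ : F}, Thm Γ φ → (∀ ψ ∈ Γ, Thm Δ ψ) → Thm Δ φ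

/-- Finitarity. -/
def DeductiveSystem.Finitary {F : Type*} (L : DeductiveSystem F) : Prop :=
  ∀ (Γ : Set F) (φ : F), L.Thm Γ φ → ∃ Γ' ⊆ Γ, Γ'.Finite ∧ L.Thm Γ' φ


/-!
Enumerate the formulas as `φ₀, φ₁, …` and translate them one at a time, `φₙ` getting the
variable `pₙ`. The translation of `φₙ` says: either `pₙ` holds or `φₙ` is derivable from earlier
formulas whose translations hold; and every earlier formula derivable from `φₙ` together with
earlier formulas whose translations hold has a translation that holds. Then under every valuation
the formulas whose translations hold form a theory (closed under finite derivations, hence under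
all of them by finitarity), while the valuation `pₙ := (Γ ⊢ φₙ)` makes them exactly the
consequences of `Γ`. A consequence relation is determined by its theories.
-/

namespace PropForm

noncomputable def iConj {ι : Type*} [Finite ι] (f : ι → PropForm) : PropForm :=
  letI := Fintype.ofFinite ι
  (Finset.univ.toList.map f).foldr .and .top

noncomputable def iDisj {ι : Type*} [Finite ι] (f : ι → PropForm) : PropForm :=
  letI := Fintype.ofFinite ι
  (Finset.univ.toList.map f).foldr .or .bot

variable {v : ℕ → Bool}

@[simp]
theorem eval_and {φ ψ : PropForm} :
    (and φ ψ).eval v = true ↔ φ.eval v = true ∧ ψ.eval v = true := by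
  simp [eval]

@[simp]
theorem eval_or {φ ψ : PropForm} :
    (or φ ψ).eval v = true ↔ φ.eval v = true ∨ ψ.eval v = true := by
  simp [eval]

@[simp]
theorem eval_imp {φ ψ : PropForm} :
    (imp φ ψ).eval v = true ↔ (φ.eval v = true → ψ.eval v = true) := by
  cases h : φ.eval v <;> simp [eval, h]

theorem eval_foldr_and (l : List PropForm) :
    (l.foldr PropForm.and PropForm.top).eval v = true ↔ ∀ φ ∈ l, φ.eval v = true := by
  induction l with
  | nil => simp [eval]
  | cons φ l ih => simp [eval, ih]

theorem eval_foldr_or (l : List PropForm) :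
    (l.foldr PropForm.or PropForm.bot).eval v = true ↔ ∃ φ ∈ l, φ.eval v = true := by
  induction l with
  | nil => simp [eval]
  | cons φ l ih => simp [eval, ih]

@[simp]
theorem eval_iConj {ι : Type*} [Finite ι] (f : ι → PropForm) :
    (iConj f).eval v = true ↔ ∀ i, (f i).eval v = true := by
  simp [iConj, eval_foldr_and]

@[simp]
theorem eval_iDisj {ι : Type*} [Finite ι] (f : ι → PropForm) :
    (iDisj f).eval v = true ↔ ∃ i, (f i).eval v = true := by
  simp [iDisj, eval_foldr_or]

end PropForm

namespace DeductiveSystem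

variable {F : Type} (L : DeductiveSystem F) (e : F ↪ ℕ)

theorem thm_of_mem {Γ : Set F} {φ : F} (h : φ ∈ Γ) : L.Thm Γ φ :=
  L.mono (L.refl φ) (Set.singleton_subset_iff.mpr h)

def below (φ : F) : Set F := e ⁻¹' Set.Iio (e φ)

instance (φ : F) : Finite (below e φ) :=
  ((Set.finite_Iio (e φ)).preimage e.injective.injOn).to_subtype

open PropForm in
noncomputable def cpcTranslation (φ : F) : PropForm :=
  .and
    (.or (.var (e φ))
      (iDisj fun Δ : {Δ : Set (below e φ) // L.Thm (Subtype.val '' Δ) φ} =>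
        iConj fun ψ : Δ.1 => cpcTranslation ψ.1.1))
    (iConj fun p : {p : Set (below e φ) × below e φ //
        L.Thm (insert φ (Subtype.val '' p.1)) p.2} =>
      .imp (iConj fun ψ : p.1.1 => cpcTranslation ψ.1.1) (cpcTranslation p.1.2.1))
termination_by e φ
decreasing_by
  · exact ψ.1.2
  · exact ψ.1.2
  · exact p.1.2.2

variable {L e}

theorem eval_cpcTranslation {v : ℕ → Bool} {φ : F} :
    (L.cpcTranslation e φ).eval v = true ↔
      (v (e φ) = true ∨ ∃ Δ : Set (below e φ), L.Thm (Subtype.val '' Δ) φ ∧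
          ∀ ψ ∈ Δ, (L.cpcTranslation e ψ).eval v = true) ∧
        ∀ (Δ : Set (below e φ)) (χ : below e φ), L.Thm (insert φ (Subtype.val '' Δ)) χ →
          (∀ ψ ∈ Δ, (L.cpcTranslation e ψ).eval v = true) →
            (L.cpcTranslation e χ).eval v = true := by
  rw [cpcTranslation]
  simp [PropForm.eval.eq_1]

theorem eval_cpcTranslation_of_thm_of_finite {v : ℕ → Bool} {Γ : Set F} {φ : F}
    (hΓ : Γ.Finite) (h : L.Thm Γ φ) (hv : ∀ ψ ∈ Γ, (L.cpcTranslation e ψ).eval v = true) :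
    (L.cpcTranslation e φ).eval v = true := by
  induction φ using (InvImage.wf e wellFounded_lt).induction generalizing Γ with
  | _ φ ih =>
    by_cases hφ : φ ∈ Γ
    · exact hv φ hφ
    by_cases hbelow : Γ ⊆ below e φ
    · refine eval_cpcTranslation.mpr ⟨.inr ⟨Subtype.val ⁻¹' Γ, ?_, fun ψ hψ => hv ψ hψ⟩, ?_⟩
      · rwa [Subtype.image_preimage_coe, Set.inter_eq_right.mpr hbelow]
      intro Δ χ hχ hΔ
      refine ih χ χ.2 (Γ := Γ ∪ Subtype.val '' Δ) (hΓ.union (Set.toFinite _)) ?_ ?_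
      · refine L.cut hχ fun ψ hψ => ?_
        rcases hψ with rfl | hψ
        · exact L.mono h Set.subset_union_left
        · exact L.thm_of_mem (Or.inr hψ)
      · rintro ψ (hψ | ⟨ψ, hψ, rfl⟩)
        exacts [hv ψ hψ, hΔ ψ hψ]
    -- else `φ` precedes the last formula `ψ` of `Γ`, and the second conjunct for `ψ` applies
    obtain ⟨ψ₀, hψ₀Γ, hψ₀⟩ := Set.not_subset.mp hbelow
    obtain ⟨ψ, hψΓ, hψmax⟩ := Set.exists_max_image Γ e hΓ ⟨ψ₀, hψ₀Γ⟩
    have hφψ : e φ < e ψ :=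
      (not_lt.mp hψ₀).trans (hψmax ψ₀ hψ₀Γ) |>.lt_of_ne fun h => hφ (e.injective h ▸ hψΓ)
    refine (eval_cpcTranslation.mp (hv ψ hψΓ)).2 (Subtype.val ⁻¹' Γ) ⟨φ, hφψ⟩ ?_ fun ρ hρ => hv ρ hρ
    refine L.mono h fun ρ hρ => ?_
    rw [Subtype.image_preimage_coe]
    rcases eq_or_ne ρ ψ with rfl | hne
    · exact .inl rfl
    · exact .inr ⟨(hψmax ρ hρ).lt_of_ne (e.injective.ne hne), hρ⟩

theorem eval_cpcTranslation_of_thm (hL : L.Finitary) {v : ℕ → Bool} {Γ : Set F} {φ : F}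
    (h : L.Thm Γ φ) (hv : ∀ ψ ∈ Γ, (L.cpcTranslation e ψ).eval v = true) :
    (L.cpcTranslation e φ).eval v = true := by
  obtain ⟨Γ', hΓ'Γ, hΓ', h'⟩ := hL Γ φ h
  exact eval_cpcTranslation_of_thm_of_finite hΓ' h' fun ψ hψ => hv ψ (hΓ'Γ hψ)

theorem eval_cpcTranslation_iff_thm {v : ℕ → Bool} {Γ : Set F}
    (hv : ∀ ψ, v (e ψ) = true ↔ L.Thm Γ ψ) (φ : F) :
    (L.cpcTranslation e φ).eval v = true ↔ L.Thm Γ φ := by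
  induction φ using (InvImage.wf e wellFounded_lt).induction with
  | _ φ ih =>
    rw [eval_cpcTranslation]
    constructor
    · rintro ⟨hφ | ⟨Δ, hΔφ, hΔ⟩, -⟩
      · exact (hv φ).mp hφ
      · exact L.cut hΔφ fun _ ⟨ψ, hψ, hψeq⟩ => hψeq ▸ (ih ψ ψ.2).mp (hΔ ψ hψ)
    · intro hφ
      refine ⟨.inl ((hv φ).mpr hφ), fun Δ χ hχ hΔ => (ih χ χ.2).mpr (L.cut hχ ?_)⟩
      rintro _ (rfl | ⟨ψ, hψ, rfl⟩)
      exacts [hφ, (ih ψ ψ.2).mp (hΔ ψ hψ)]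

end DeductiveSystem

/-- CPC is universal: every finitary deductive system over a countable set of formulas
can be conservatively translated into classical propositional logic. -/
theorem cpc_universal {F : Type} [Countable F]
    (L : DeductiveSystem F) (hfin : L.Finitary) :
    ∃ f : F → PropForm, ∀ (Γ : Set F) (φ : F), L.Thm Γ φ ↔ Cpc (f '' Γ) (f φ) := by
  obtain ⟨e⟩ := countable_iff_nonempty_embedding.mp ‹Countable F›
  refine ⟨L.cpcTranslation e, fun Γ φ => ⟨fun h v hv => ?_, fun h => ?_⟩⟩
  · exact DeductiveSystem.eval_cpcTranslation_of_thm hfin h fun ψ hψ => hv _ ⟨ψ, hψ, rfl⟩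
  classical
  let v : ℕ → Bool := Function.extend e (fun ψ => decide (L.Thm Γ ψ)) fun _ => false
  have hv (ψ : F) : v (e ψ) = true ↔ L.Thm Γ ψ := by
    simp [v, e.injective.extend_apply]
  refine (DeductiveSystem.eval_cpcTranslation_iff_thm hv φ).mp (h v ?_)
  rintro _ ⟨ψ, hψ, rfl⟩
  exact (DeductiveSystem.eval_cpcTranslation_iff_thm hv ψ).mpr (L.thm_of_mem hψ)
end

section
/- Kleene's 3-valued logic K with truth constants is universal: the map sending each classical formula to a conjunctive normal form (where no clause contains both a variable and its negation, with ⊤, ⊥ for empty conjunctions/disjunctions) is a conservative translation from CPC into K. -/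
/-!
A Kleene valuation `v` is a partial classical valuation; call `b : ℕ → Bool` a completion of `v`
if it agrees with `v` wherever `v` is classical. Kleene evaluation is monotone, so a formula with
value `1` under `v` is true under every completion of `v`. Conversely, if a CNF is not `1` under
`v`, one of its clauses has no literal of value `1`; when the clause has no complementary pair of
literals, a single completion falsifies all of them. So a good CNF has value `1` under `v` iff it
is true under every completion of `v`, and conservativity follows because a classical valuation
is its own only completion. Good CNFs exist by the truth-table construction.
-/

/-- Formulas in the connectives `∧, ∨, ¬, ⊤, ⊥` (a functionally complete set for CPC). -/
inductive KForm : Type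
  | var : ℕ → KForm
  | bot : KForm
  | top : KForm
  | neg : KForm → KForm
  | and : KForm → KForm → KForm
  | or : KForm → KForm → KForm
  deriving DecidableEq

/-- Boolean evaluation. -/
def KForm.evalB (v : ℕ → Bool) : KForm → Bool
  | .var n => v n
  | .bot => false
  | .top => true
  | .neg φ => !(φ.evalB v)
  | .and φ ψ => φ.evalB v && ψ.evalB v
  | .or φ ψ => φ.evalB v || ψ.evalB v

/-- The three truth values 0, *, 1 of the Kleene algebra A3. -/
inductive K3 : Type
  | zero : K3
  | half : K3
  | one : K3
  deriving DecidableEq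

/-- The truth order 0 < * < 1 as natural numbers. -/
def K3.toNat : K3 → ℕ
  | .zero => 0
  | .half => 1
  | .one => 2

/-- Meet (min) in the truth order. -/
def K3.min (a b : K3) : K3 := if a.toNat ≤ b.toNat then a else b

/-- Join (max) in the truth order. -/
def K3.max (a b : K3) : K3 := if a.toNat ≤ b.toNat then b else a

/-- Kleene negation. -/
def K3.not : K3 → K3
  | .zero => .one
  | .half => .half
  | .one => .zero

/-- Evaluation in the Kleene algebra A3. -/
def KForm.eval3 (v : ℕ → K3) : KForm → K3
  | .var n => v n
  | .bot => .zero
  | .top => .one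
  | .neg φ => (φ.eval3 v).not
  | .and φ ψ => (φ.eval3 v).min (ψ.eval3 v)
  | .or φ ψ => (φ.eval3 v).max (ψ.eval3 v)

/-- Classical consequence (over the language `∧, ∨, ¬, ⊤, ⊥`). -/
def CpcK (Γ : Set KForm) (φ : KForm) : Prop :=
  ∀ v : ℕ → Bool, (∀ ψ ∈ Γ, ψ.evalB v = true) → φ.evalB v = true

/-- Kleene's 3-valued logic: only `1` is designated. -/
def KleeneK (Γ : Set KForm) (φ : KForm) : Prop :=
  ∀ v : ℕ → K3, (∀ ψ ∈ Γ, ψ.eval3 v = .one) → φ.eval3 v = .one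

/-- The logic of paradox LP: both `*` and `1` are designated. -/
def LPK (Γ : Set KForm) (φ : KForm) : Prop :=
  ∀ v : ℕ → K3, (∀ ψ ∈ Γ, ψ.eval3 v ≠ .zero) → φ.eval3 v ≠ .zero

/-- A literal: a variable index together with a sign (`true` = positive). -/
def litForm (l : ℕ × Bool) : KForm :=
  if l.2 then .var l.1 else .neg (.var l.1)

/-- The disjunction of a clause (a list of literals); the empty clause is `⊥`. -/
def clauseForm (c : List (ℕ × Bool)) : KForm :=
  c.foldr (fun l ψ => .or (litForm l) ψ) .bot

/-- A clause is good if no variable occurs both positively and negatively in it. -/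
def GoodClause (c : List (ℕ × Bool)) : Prop :=
  ∀ n : ℕ, ¬ ((n, true) ∈ c ∧ (n, false) ∈ c)

/-- The conjunction of a list of clauses; the empty conjunction is `⊤`. -/
def cnfForm (cs : List (List (ℕ × Bool))) : KForm :=
  cs.foldr (fun c ψ => .and (clauseForm c) ψ) .top

namespace K3

def ofBool : Bool → K3
  | false => .zero
  | true => .one

theorem min_eq_one {a b : K3} : a.min b = .one ↔ a = .one ∧ b = .one := by
  cases a <;> cases b <;> decide

theorem min_eq_zero {a b : K3} : a.min b = .zero ↔ a = .zero ∨ b = .zero := by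
  cases a <;> cases b <;> decide

theorem max_eq_one {a b : K3} : a.max b = .one ↔ a = .one ∨ b = .one := by
  cases a <;> cases b <;> decide

theorem max_eq_zero {a b : K3} : a.max b = .zero ↔ a = .zero ∧ b = .zero := by
  cases a <;> cases b <;> decide

theorem not_eq_ofBool {a : K3} {β : Bool} : a.not = ofBool β ↔ a = ofBool (!β) := by
  cases a <;> cases β <;> decide

theorem ofBool_injective : Function.Injective ofBool := by
  decide

end K3

open K3

def IsCompletion (b : ℕ → Bool) (v : ℕ → K3) : Prop :=
  ∀ n β, v n = ofBool β → b n = β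

theorem isCompletion_ofBool_comp_iff {b v : ℕ → Bool} : IsCompletion b (ofBool ∘ v) ↔ b = v :=
  ⟨fun h => funext fun n => h n (v n) rfl,
    fun h _ _ hn => h ▸ ofBool_injective hn⟩

theorem KForm.evalB_eq_of_eval3_eq_ofBool {b : ℕ → Bool} {v : ℕ → K3} (hb : IsCompletion b v) :
    ∀ (φ : KForm) (β : Bool), φ.eval3 v = ofBool β → φ.evalB b = β
  | .var _, _, h => hb _ _ h
  | .bot, β, h => by cases β <;> simp_all [eval3, evalB, ofBool]
  | .top, β, h => by cases β <;> simp_all [eval3, evalB, ofBool]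
  | .neg φ, β, h => by
    rw [eval3, not_eq_ofBool] at h
    simp [evalB, evalB_eq_of_eval3_eq_ofBool hb φ _ h]
  | .and φ ψ, false, h => by
    rcases min_eq_zero.1 h with h | h <;>
      simp [evalB, evalB_eq_of_eval3_eq_ofBool hb _ false h]
  | .and φ ψ, true, h => by
    obtain ⟨hφ, hψ⟩ := min_eq_one.1 h
    simp [evalB, evalB_eq_of_eval3_eq_ofBool hb _ true hφ,
      evalB_eq_of_eval3_eq_ofBool hb _ true hψ]
  | .or φ ψ, false, h => by
    obtain ⟨hφ, hψ⟩ := max_eq_zero.1 h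
    simp [evalB, evalB_eq_of_eval3_eq_ofBool hb _ false hφ,
      evalB_eq_of_eval3_eq_ofBool hb _ false hψ]
  | .or φ ψ, true, h => by
    rcases max_eq_one.1 h with h | h <;>
      simp [evalB, evalB_eq_of_eval3_eq_ofBool hb _ true h]

section Semantics

variable (l : ℕ × Bool) (c : List (ℕ × Bool)) (cs : List (List (ℕ × Bool)))
  (b : ℕ → Bool) (v : ℕ → K3)

theorem evalB_litForm : (litForm l).evalB b = true ↔ b l.1 = l.2 := by
  obtain ⟨n, _ | _⟩ := l <;> simp [litForm, KForm.evalB]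

theorem eval3_litForm_eq_one : (litForm l).eval3 v = .one ↔ v l.1 = ofBool l.2 := by
  obtain ⟨n, _ | _⟩ := l <;> simp [litForm, KForm.eval3, ofBool]
  cases v n <;> decide

theorem evalB_clauseForm : (clauseForm c).evalB b = true ↔ ∃ l ∈ c, b l.1 = l.2 := by
  induction c with
  | nil => simp [clauseForm, KForm.evalB]
  | cons l c ih => simp_all [clauseForm, KForm.evalB, evalB_litForm]

theorem eval3_clauseForm_eq_one :
    (clauseForm c).eval3 v = .one ↔ ∃ l ∈ c, v l.1 = ofBool l.2 := by
  induction c with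
  | nil => simp [clauseForm, KForm.eval3]
  | cons l c ih => simp_all [clauseForm, KForm.eval3, max_eq_one, eval3_litForm_eq_one]

theorem evalB_cnfForm :
    (cnfForm cs).evalB b = true ↔ ∀ c ∈ cs, (clauseForm c).evalB b = true := by
  induction cs with
  | nil => simp [cnfForm, KForm.evalB]
  | cons c cs ih => simp_all [cnfForm, KForm.evalB]

theorem eval3_cnfForm_eq_one :
    (cnfForm cs).eval3 v = .one ↔ ∀ c ∈ cs, (clauseForm c).eval3 v = .one := by
  induction cs with
  | nil => simp [cnfForm, KForm.eval3]
  | cons c cs ih => simp_all [cnfForm, KForm.eval3, min_eq_one]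

end Semantics

theorem exists_isCompletion_evalB_clauseForm_eq_false {c : List (ℕ × Bool)}
    (hc : GoodClause c) {v : ℕ → K3} (hv : (clauseForm c).eval3 v ≠ .one) :
    ∃ b, IsCompletion b v ∧ (clauseForm c).evalB b = false := by
  simp only [ne_eq, eval3_clauseForm_eq_one, not_exists, not_and] at hv
  refine ⟨fun n => if (n, true) ∈ c then false else if (n, false) ∈ c then true
    else decide (v n = .one), ?_, ?_⟩
  · intro n β hn
    dsimp only
    split_ifs with hpos hneg
    · cases β
      · rfl
      · exact absurd hn (hv _ hpos)
    · cases β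
      · exact absurd hn (hv _ hneg)
      · rfl
    · cases β <;> simp [hn, ofBool]
  · rw [Bool.eq_false_iff, ne_eq, evalB_clauseForm]
    rintro ⟨⟨n, _ | _⟩, hl, h⟩
    · have hpos : (n, true) ∉ c := fun hpos => hc n ⟨hpos, hl⟩
      simp [hpos, hl] at h
    · simp [hl] at h

theorem eval3_clauseForm_eq_one_iff_forall_isCompletion {c : List (ℕ × Bool)}
    (hc : GoodClause c) (v : ℕ → K3) :
    (clauseForm c).eval3 v = .one ↔ ∀ b, IsCompletion b v → (clauseForm c).evalB b = true := by
  refine ⟨fun h b hb => (clauseForm c).evalB_eq_of_eval3_eq_ofBool hb true h, fun h => ?_⟩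
  by_contra hv
  obtain ⟨b, hb, hcb⟩ := exists_isCompletion_evalB_clauseForm_eq_false hc hv
  simp [h b hb] at hcb

theorem eval3_cnfForm_eq_one_iff_forall_isCompletion {cs : List (List (ℕ × Bool))}
    (hcs : ∀ c ∈ cs, GoodClause c) (v : ℕ → K3) :
    (cnfForm cs).eval3 v = .one ↔ ∀ b, IsCompletion b v → (cnfForm cs).evalB b = true := by
  have hclause c (hc : c ∈ cs) := eval3_clauseForm_eq_one_iff_forall_isCompletion (hcs c hc) v
  simp only [eval3_cnfForm_eq_one, evalB_cnfForm]
  exact ⟨fun h b hb c hc => (hclause c hc).1 (h c hc) b hb,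
    fun h c hc => (hclause c hc).2 fun b hb => h b hb c hc⟩

def KForm.vars : KForm → List ℕ
  | .var n => [n]
  | .bot | .top => []
  | .neg φ => φ.vars
  | .and φ ψ | .or φ ψ => φ.vars ++ ψ.vars

theorem KForm.evalB_congr {b b' : ℕ → Bool} :
    ∀ {φ : KForm}, (∀ n ∈ φ.vars, b n = b' n) → φ.evalB b = φ.evalB b'
  | .var n, h => h n (by simp [vars])
  | .bot, _ | .top, _ => rfl
  | .neg φ, h => by simp only [evalB, evalB_congr (φ := φ) h]
  | .and φ ψ, h | .or φ ψ, h => by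
    simp only [evalB]
    rw [evalB_congr fun n hn => h n (by simp [vars, hn]),
      evalB_congr fun n hn => h n (by simp [vars, hn])]

theorem goodClause_map (l : List ℕ) (g : ℕ → Bool) : GoodClause (l.map fun n => (n, g n)) := by
  rintro n ⟨hpos, hneg⟩
  simp only [List.mem_map, Prod.mk.injEq] at hpos hneg
  obtain ⟨_, -, rfl, hpos⟩ := hpos
  obtain ⟨_, -, rfl, hneg⟩ := hneg
  exact Bool.noConfusion (hpos.symm.trans hneg)

theorem evalB_clauseForm_map_not_eq_false (l : List ℕ) (w b : ℕ → Bool) :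
    (clauseForm (l.map fun n => (n, !w n))).evalB b = false ↔ ∀ n ∈ l, b n = w n := by
  simp [← Bool.not_eq_true, evalB_clauseForm]

/-- One clause per falsifying row of the truth table of `φ`, the row being encoded by the
sublist of `φ.vars` it makes true. -/
def truthTableCNF (φ : KForm) : List (List (ℕ × Bool)) :=
  (φ.vars.sublists.filter fun s => !φ.evalB fun n => n ∈ s).map
    fun s => φ.vars.map fun n => (n, !decide (n ∈ s))

theorem truthTableCNF_good (φ : KForm) : ∀ c ∈ truthTableCNF φ, GoodClause c := by
  simp only [truthTableCNF, List.forall_mem_map]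
  exact fun s _ => goodClause_map _ _

theorem evalB_truthTableCNF (φ : KForm) (b : ℕ → Bool) :
    (cnfForm (truthTableCNF φ)).evalB b = φ.evalB b := by
  have hrow : ∀ s : List ℕ, (∀ n ∈ φ.vars, b n = decide (n ∈ s)) →
      φ.evalB b = φ.evalB fun n => n ∈ s := fun _ => KForm.evalB_congr
  rw [Bool.eq_iff_iff, evalB_cnfForm]
  simp only [truthTableCNF, List.forall_mem_map, List.mem_filter, Bool.not_eq_true',
    ← Bool.not_eq_false (KForm.evalB b (clauseForm _)), evalB_clauseForm_map_not_eq_false]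
  constructor
  · intro h
    have hagree : ∀ n ∈ φ.vars, b n = decide (n ∈ φ.vars.filter b) := by
      intro n hn
      simp [hn]
    by_contra hφ
    rw [Bool.not_eq_true, hrow _ hagree] at hφ
    exact h _ ⟨List.mem_sublists.2 List.filter_sublist, hφ⟩ hagree
  · intro hφ s ⟨_, hs⟩ hagree
    rw [hrow s hagree, hs] at hφ
    exact Bool.false_ne_true hφ

/-- Kleene's logic (with truth constants) is universal: any map sending each classical
formula to a classically equivalent conjunctive normal form in which no clause contains
a variable together with its negation is a conservative translation of CPC into K. -/
theorem kleene_universal :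
    (∃ f : KForm → List (List (ℕ × Bool)),
      ∀ φ : KForm, (∀ c ∈ f φ, GoodClause c) ∧
        ∀ v : ℕ → Bool, (cnfForm (f φ)).evalB v = φ.evalB v) ∧
    (∀ f : KForm → List (List (ℕ × Bool)),
      (∀ φ : KForm, (∀ c ∈ f φ, GoodClause c) ∧
        ∀ v : ℕ → Bool, (cnfForm (f φ)).evalB v = φ.evalB v) →
      ∀ (Γ : Set KForm) (φ : KForm),
        CpcK Γ φ ↔ KleeneK ((fun ψ => cnfForm (f ψ)) '' Γ) (cnfForm (f φ))) := by
  refine ⟨⟨truthTableCNF, fun φ => ⟨truthTableCNF_good φ, evalB_truthTableCNF φ⟩⟩,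
    fun f hf Γ φ => ?_⟩
  have hK : ∀ ψ v, (cnfForm (f ψ)).eval3 v = .one ↔ ∀ b, IsCompletion b v → ψ.evalB b = true := by
    intro ψ v
    simpa only [(hf ψ).2] using eval3_cnfForm_eq_one_iff_forall_isCompletion (hf ψ).1 v
  constructor
  · intro hC v hv
    rw [hK]
    exact fun b hb => hC b fun ψ hψ => (hK ψ v).1 (hv _ ⟨ψ, hψ, rfl⟩) b hb
  · intro hK' v hv
    refine (hK φ (ofBool ∘ v)).1 (hK' _ ?_) v (isCompletion_ofBool_comp_iff.2 rfl)
    rintro _ ⟨ψ, hψ, rfl⟩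
    exact (hK ψ _).2 fun b hb => isCompletion_ofBool_comp_iff.1 hb ▸ hv ψ hψ
end

section
/- For any set of clauses Γ ∪ {φ} (disjunctions of literals where no clause contains a variable together with its negation), Γ ⊢_CPC φ implies Γ ⊢_K φ in Kleene's 3-valued logic. -/
lemma K3.max_eq_one_s8 (a b : K3) : K3.max a b = .one ↔ a = .one ∨ b = .one := by
  cases a <;> cases b <;> decide

lemma clause3_one (v : ℕ → K3) (c : List (ℕ × Bool)) :
    (clauseForm c).eval3 v = .one ↔ ∃ l ∈ c, (litForm l).eval3 v = .one := by
  induction c with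
  | nil => simp [clauseForm, KForm.eval3]
  | cons a t ih =>
    simp [clauseForm, KForm.eval3, K3.max_eq_one_s8] at ih ⊢
    rw [ih]

lemma clauseB_true (v : ℕ → Bool) (c : List (ℕ × Bool)) :
    (clauseForm c).evalB v = true ↔ ∃ l ∈ c, (litForm l).evalB v = true := by
  induction c with
  | nil => simp [clauseForm, KForm.evalB]
  | cons a t ih =>
    simp [clauseForm, KForm.evalB] at ih ⊢
    rw [ih]

/-- For sets of clauses, classical consequence implies Kleene consequence. -/
theorem cpc_to_kleene_on_clauses (Γ : Set (List (ℕ × Bool))) (c : List (ℕ × Bool))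
    (hΓ : ∀ d ∈ Γ, GoodClause d) (hc : GoodClause c)
    (h : CpcK (clauseForm '' Γ) (clauseForm c)) :
    KleeneK (clauseForm '' Γ) (clauseForm c) := by
  intro v hv
  by_contra hcon
  set b : ℕ → Bool := fun n =>
    match v n with
    | .one => true
    | .zero => false
    | .half => decide ((n, false) ∈ c) with hb
  have hΓb : ∀ ψ ∈ clauseForm '' Γ, ψ.evalB b = true := by
    rintro ψ ⟨d, hd, rfl⟩
    have h1 := (clause3_one v d).mp (hv _ ⟨d, hd, rfl⟩)
    obtain ⟨⟨n, s⟩, hmem, hl⟩ := h1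
    rw [clauseB_true]
    refine ⟨(n, s), hmem, ?_⟩
    cases s with
    | true =>
      simp [litForm, KForm.eval3] at hl
      simp [litForm, KForm.evalB, hb, hl]
    | false =>
      simp [litForm, KForm.eval3] at hl
      have : v n = .zero := by cases hvn : v n <;> simp [hvn, K3.not] at hl ⊢
      simp [litForm, KForm.evalB, hb, this]
  have hcb := h b hΓb
  rw [clauseB_true] at hcb
  obtain ⟨⟨n, s⟩, hmem, hl⟩ := hcb
  have hnot : ¬ (litForm (n, s)).eval3 v = .one := by
    intro hone
    exact hcon ((clause3_one v c).mpr ⟨(n, s), hmem, hone⟩)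
  cases s with
  | true =>
    simp [litForm, KForm.evalB, hb] at hl
    simp [litForm, KForm.eval3] at hnot
    cases hvn : v n with
    | one => exact hnot hvn
    | zero => rw [hvn] at hl; simp at hl
    | half =>
      rw [hvn] at hl
      simp at hl
      exact hc n ⟨hmem, hl⟩
  | false =>
    simp [litForm, KForm.evalB, hb] at hl
    simp [litForm, KForm.eval3] at hnot
    cases hvn : v n with
    | zero => exact hnot (by rw [hvn]; rfl)
    | one => rw [hvn] at hl; simp at hl
    | half =>
      rw [hvn] at hl
      simp at hl
      exact hl hmem
end

section
/- A set B of Boolean functions generates a clone containing the binary implication function x → y (= ¬x ∨ y) if and only if B is not contained in any of the clones P0 (0-preserving functions), D (self-dual functions), A (affine functions over GF(2)), or M (monotone functions). -/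
/-- Membership in the clone generated by a family `B` of Boolean functions
(given with their arities): the least set of functions containing `B`,
containing all projections, and closed under composition. -/
inductive InClone (B : ∀ n : ℕ, Set ((Fin n → Bool) → Bool)) :
    ∀ n : ℕ, ((Fin n → Bool) → Bool) → Prop
  | of {n : ℕ} {f : (Fin n → Bool) → Bool} : f ∈ B n → InClone B n f
  | proj {n : ℕ} (i : Fin n) : InClone B n (fun x => x i)
  | comp {n m : ℕ} (f : (Fin m → Bool) → Bool) (g : Fin m → ((Fin n → Bool) → Bool)) :
      InClone B m f → (∀ i, InClone B n (g i)) →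
      InClone B n (fun x => f (fun i => g i x))

/-- Boolean implication as a binary Boolean function. -/
def impFun : (Fin 2 → Bool) → Bool := fun x => !(x 0) || x 1

/-- `f` preserves `0`. -/
def Pres0 {n : ℕ} (f : (Fin n → Bool) → Bool) : Prop := f (fun _ => false) = false

/-- `f` is self-dual. -/
def SelfDual {n : ℕ} (f : (Fin n → Bool) → Bool) : Prop :=
  ∀ x : Fin n → Bool, f (fun i => !(x i)) = !(f x)

/-- `f` is affine over GF(2): `f(x) = Σ_{i∈I} x_i + c (mod 2)`. -/
def AffineFun {n : ℕ} (f : (Fin n → Bool) → Bool) : Prop :=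
  ∃ (s : Finset (Fin n)) (c : ZMod 2), ∀ x : Fin n → Bool,
    (if f x then (1 : ZMod 2) else 0) = (∑ i ∈ s, if x i then (1 : ZMod 2) else 0) + c

/-- `f` is monotone with respect to the coordinatewise order. -/
def MonotoneFun {n : ℕ} (f : (Fin n → Bool) → Bool) : Prop :=
  ∀ x y : Fin n → Bool, (∀ i, x i ≤ y i) → f x ≤ f y

/-!
Each of `P0`, `D`, `M`, `A` is the set of functions preserving a relation: `{0}`, the graph of
negation, `≤`, and `{v ∈ 𝔽₂⁴ | v₀ + v₁ + v₂ + v₃ = 0}`. Such sets are closed under composition,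
and implication preserves none of these relations.

Conversely, identifying all variables of a function that does not preserve `0` gives `¬x` or the
constant `1`; in the first case a non-self-dual function yields a constant, hence `1` as well.
Once `1` is available, freeing one coordinate `i` of an `n`-ary function and setting every other
coordinate to `1` or `y` produces binary functions. From a non-monotone function this gives `h`
with `h(0,0) = 1`, `h(1,0) = 0`, so that `h(x,x) = ¬x`, `h = ↔` or `h = →`; from a non-affine one
it gives `g` of odd weight, i.e. `g = ((x ⊕ a) ∧ (y ⊕ b)) ⊕ c`. Implication is obtained from `g`
with the help of `¬` or of `↔`.
-/

open Function

def Preserves {k n : ℕ} (R : Set (Fin k → Bool)) (f : (Fin n → Bool) → Bool) : Prop :=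
  ∀ x : Fin k → Fin n → Bool, (∀ i, (fun j => x j i) ∈ R) → (fun j => f (x j)) ∈ R

theorem InClone.preserves {B : ∀ n : ℕ, Set ((Fin n → Bool) → Bool)} {k : ℕ}
    {R : Set (Fin k → Bool)} (hB : ∀ n, ∀ f ∈ B n, Preserves R f) {n : ℕ}
    {f : (Fin n → Bool) → Bool} (hf : InClone B n f) : Preserves R f := by
  induction hf with
  | of hf => exact hB _ _ hf
  | proj i => exact fun x hx => hx i
  | comp f g _ _ ihf ihg => exact fun x hx => ihf (fun j i => g i (x j)) fun i => ihg i x hx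

def toZMod2 (b : Bool) : ZMod 2 := if b then 1 else 0

theorem toZMod2_xor (a b : Bool) : toZMod2 (xor a b) = toZMod2 a + toZMod2 b := by
  cases a <;> cases b <;> decide

section Relations

variable {n : ℕ} {f : (Fin n → Bool) → Bool}

theorem Pres0.preserves (hf : Pres0 f) : Preserves {v : Fin 1 → Bool | v 0 = false} f := by
  intro x hx
  have : x 0 = fun _ => false := funext hx
  simp only [Set.mem_ofPred_eq, this]
  exact hf

theorem SelfDual.preserves (hf : SelfDual f) :
    Preserves {v : Fin 2 → Bool | v 1 = !v 0} f := by
  intro x hx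
  have : x 1 = fun i => !x 0 i := funext hx
  simp only [Set.mem_ofPred_eq, this]
  exact hf (x 0)

theorem MonotoneFun.preserves (hf : MonotoneFun f) :
    Preserves {v : Fin 2 → Bool | v 0 ≤ v 1} f :=
  fun x hx => hf (x 0) (x 1) hx

theorem AffineFun.preserves (hf : AffineFun f) :
    Preserves {v : Fin 4 → Bool | ∑ j, toZMod2 (v j) = 0} f := by
  obtain ⟨s, c, hs⟩ := hf
  intro x hx
  have hs' : ∀ y, toZMod2 (f y) = ∑ i ∈ s, toZMod2 (y i) + c := hs
  have h4 : (4 : ZMod 2) = 0 := rfl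
  simp only [Set.mem_ofPred_eq] at hx ⊢
  simp only [hs', Finset.sum_add_distrib, Finset.sum_const, Finset.card_univ, Fintype.card_fin]
  rw [Finset.sum_comm, Finset.sum_eq_zero fun i _ => hx i, nsmul_eq_mul, Nat.cast_ofNat, h4,
    zero_mul, add_zero]

end Relations

theorem impFun_not_preserves_zero : ¬ Preserves {v : Fin 1 → Bool | v 0 = false} impFun :=
  fun h => absurd (h ![![false, false]] (by decide)) (by decide)

theorem impFun_not_preserves_neg : ¬ Preserves {v : Fin 2 → Bool | v 1 = !v 0} impFun :=
  fun h => absurd (h ![![false, false], ![true, true]] (by decide)) (by decide)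

theorem impFun_not_preserves_le : ¬ Preserves {v : Fin 2 → Bool | v 0 ≤ v 1} impFun :=
  fun h => absurd (h ![![false, false], ![true, false]] (by decide)) (by decide)

theorem impFun_not_preserves_sum :
    ¬ Preserves {v : Fin 4 → Bool | ∑ j, toZMod2 (v j) = 0} impFun :=
  fun h => absurd (h ![![false, false], ![false, true], ![true, false], ![true, true]]
    (by decide)) (by decide)

def binOp (op : Bool → Bool → Bool) : (Fin 2 → Bool) → Bool := fun v => op (v 0) (v 1)

theorem impFun_eq_binOp : impFun = binOp fun x y => !x || y := rfl

def OddWeight (g : Bool → Bool → Bool) : Prop :=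
  xor (xor (g false false) (g false true)) (xor (g true false) (g true true)) = true

theorem exists_xor_eq_imp_of_oddWeight :
    ∀ g, OddWeight g →
      ∃ a b c : Bool, (fun x y => xor (g (xor x a) (xor y b)) c) = fun x y => !x || y := by
  unfold OddWeight; decide

/- Over `𝔽₂` write `g = xy + αx + βy + γ`. Then `g(x,y) + g(x,1) = (x + β)(y + 1)` and
`g(y,y) + g(y,1) = β(y + 1)`, which sum to `x(y + 1) = ¬(x → y)`. -/
theorem xnor_eq_imp_of_oddWeight :
    ∀ g, OddWeight g →
      (fun x y => (g x y == g x true) == (g y y == g y true)) = fun x y => !x || y := by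
  unfold OddWeight; decide

section Binary

variable {B : ∀ n : ℕ, Set ((Fin n → Bool) → Bool)}

theorem InClone.binOp_subst {n : ℕ} {f : (Fin n → Bool) → Bool} (hf : InClone B n f)
    {s : Fin n → Bool → Bool → Bool} (hs : ∀ k, InClone B 2 (binOp (s k))) :
    InClone B 2 (binOp fun x y => f fun k => s k x y) :=
  .comp f (fun k => binOp (s k)) hf hs

theorem inClone_fst : InClone B 2 (binOp fun x _ => x) := .proj 0

theorem inClone_snd : InClone B 2 (binOp fun _ y => y) := .proj 1

theorem InClone.binOp_comp {op p q : Bool → Bool → Bool} (hop : InClone B 2 (binOp op))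
    (hp : InClone B 2 (binOp p)) (hq : InClone B 2 (binOp q)) :
    InClone B 2 (binOp fun x y => op (p x y) (q x y)) :=
  hop.binOp_subst (s := ![p, q]) (Fin.forall_fin_two.2 ⟨hp, hq⟩)

theorem inClone_xor_fst (hn : InClone B 2 (binOp fun x _ => !x)) (a : Bool) :
    InClone B 2 (binOp fun x _ => xor x a) := by
  cases a
  · simpa only [Bool.xor_false] using inClone_fst
  · simpa only [Bool.xor_true] using hn

theorem InClone.xor_inputs_output {op : Bool → Bool → Bool} (hop : InClone B 2 (binOp op))
    (hn : InClone B 2 (binOp fun x _ => !x)) (a b c : Bool) :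
    InClone B 2 (binOp fun x y => xor (op (xor x a) (xor y b)) c) :=
  (inClone_xor_fst hn c).binOp_comp
    (hop.binOp_comp (inClone_xor_fst hn a)
      ((inClone_xor_fst hn b).binOp_comp inClone_snd inClone_snd))
    inClone_fst

theorem inClone_impFun_of_not (hn : InClone B 2 (binOp fun x _ => !x))
    {g : Bool → Bool → Bool} (hg : InClone B 2 (binOp g)) (hodd : OddWeight g) :
    InClone B 2 impFun := by
  obtain ⟨a, b, c, hg_imp⟩ := exists_xor_eq_imp_of_oddWeight g hodd
  rw [impFun_eq_binOp, ← hg_imp]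
  exact hg.xor_inputs_output hn a b c

theorem inClone_impFun_of_xnor (h1 : InClone B 2 (binOp fun _ _ => true))
    (hxnor : InClone B 2 (binOp fun x y => x == y))
    {g : Bool → Bool → Bool} (hg : InClone B 2 (binOp g)) (hodd : OddWeight g) :
    InClone B 2 impFun := by
  have hdiff₁ := hxnor.binOp_comp hg (hg.binOp_comp inClone_fst h1)
  have hdiff₂ := hxnor.binOp_comp (hg.binOp_comp inClone_snd inClone_snd)
    (hg.binOp_comp inClone_snd h1)
  rw [impFun_eq_binOp, ← xnor_eq_imp_of_oddWeight g hodd]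
  exact hxnor.binOp_comp hdiff₁ hdiff₂

theorem inClone_impFun_of_decreasing_of_oddWeight (h1 : InClone B 2 (binOp fun _ _ => true))
    {h : Bool → Bool → Bool} (hh : InClone B 2 (binOp h)) (h00 : h false false = true)
    (h10 : h true false = false)
    {g : Bool → Bool → Bool} (hg : InClone B 2 (binOp g)) (hodd : OddWeight g) :
    InClone B 2 impFun := by
  cases h11 : h true true
  · have hdiag : (fun x (_ : Bool) => h x x) = fun x _ => !x := by
      funext x _; cases x <;> assumption
    exact inClone_impFun_of_not (hdiag ▸ hh.binOp_comp inClone_fst inClone_fst) hg hodd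
  cases h01 : h false true
  · have hxnor : h = fun x y => x == y := by
      funext x y; cases x <;> cases y <;> assumption
    exact inClone_impFun_of_xnor h1 (hxnor ▸ hh) hg hodd
  · have himp : h = fun x y => !x || y := by
      funext x y; cases x <;> cases y <;> assumption
    rwa [impFun_eq_binOp, ← himp]

end Binary

def binRestrict {n : ℕ} (f : (Fin n → Bool) → Bool) (i : Fin n) (w : Fin n → Bool) :
    Bool → Bool → Bool :=
  fun x y => f (update (fun k => w k || y) i x)

section Restrict

variable {n : ℕ} {f : (Fin n → Bool) → Bool}

@[simp] theorem binRestrict_false {i : Fin n} {w : Fin n → Bool} (x : Bool) :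
    binRestrict f i w x false = f (update w i x) := by
  simp only [binRestrict, Bool.or_false]

@[simp] theorem binRestrict_true {i : Fin n} {w : Fin n → Bool} (x : Bool) :
    binRestrict f i w x true = f (update (fun _ => true) i x) := by
  simp only [binRestrict, Bool.or_true]

theorem InClone.binRestrict {B : ∀ n : ℕ, Set ((Fin n → Bool) → Bool)} (hf : InClone B n f)
    (h1 : InClone B 2 (binOp fun _ _ => true)) (i : Fin n) (w : Fin n → Bool) :
    InClone B 2 (binOp (binRestrict f i w)) := by
  refine hf.binOp_subst fun k => ?_
  simp only [update_apply]
  split_ifs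
  · exact inClone_fst
  · cases w k
    · exact inClone_snd
    · exact h1

end Restrict

section Witnesses

variable {n : ℕ} {f : (Fin n → Bool) → Bool}

theorem monotoneFun_of_update (h : ∀ i a, f (update a i false) ≤ f (update a i true)) :
    MonotoneFun f := by
  have step : ∀ a i b c, b ≤ c → f (update a i b) ≤ f (update a i c) := by
    intro a i b c hbc
    cases b <;> cases c
    · exact le_rfl
    · exact h i a
    · exact absurd hbc (by decide)
    · exact le_rfl
  intro x y hxy
  have hpath : ∀ T : Finset (Fin n), f x ≤ f (T.piecewise y x) := by
    intro T
    induction T using Finset.induction_on with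
    | empty => simp
    | insert i T hi ih =>
      rw [Finset.piecewise_insert]
      calc f x ≤ f (T.piecewise y x) := ih
        _ = f (update (T.piecewise y x) i (x i)) := by
          rw [← Finset.piecewise_eq_of_notMem T y x hi, update_eq_self]
        _ ≤ _ := step _ i _ _ (hxy i)
  simpa using hpath Finset.univ

theorem exists_update_of_not_monotoneFun (hf : ¬ MonotoneFun f) :
    ∃ i a, f (update a i false) = true ∧ f (update a i true) = false := by
  contrapose! hf
  refine monotoneFun_of_update fun i a => ?_
  have := hf i a
  revert this
  cases f (update a i false) <;> cases f (update a i true) <;> decide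

theorem affineFun_of_update (d : Fin n → Bool)
    (h : ∀ i a, f (update a i true) = xor (f (update a i false)) (d i)) : AffineFun f := by
  have step : ∀ a i b, f (update a i b) = xor (f (update a i false)) (b && d i) := by
    intro a i b; cases b
    · simp
    · simpa using h i a
  have hpath : ∀ (x : Fin n → Bool) (T : Finset (Fin n)),
      toZMod2 (f (T.piecewise x fun _ => false)) =
        ∑ i ∈ T, toZMod2 (x i && d i) + toZMod2 (f fun _ => false) := by
    intro x T
    induction T using Finset.induction_on with
    | empty => simp
    | insert i T hi ih =>
      rw [Finset.piecewise_insert, step,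
        update_eq_self_iff.2 (Finset.piecewise_eq_of_notMem T x (fun _ => false) hi).symm,
        toZMod2_xor, ih, Finset.sum_insert hi]
      ring
  refine ⟨Finset.univ.filter fun i => d i, toZMod2 (f fun _ => false), fun x => ?_⟩
  have hsum :
      ∑ i, toZMod2 (x i && d i) = ∑ i ∈ Finset.univ.filter fun i => d i, toZMod2 (x i) := by
    rw [Finset.sum_filter]
    refine Finset.sum_congr rfl fun i _ => ?_
    cases x i <;> cases d i <;> rfl
  have := hpath x Finset.univ
  rwa [Finset.piecewise_univ, hsum] at this

theorem exists_oddWeight_binRestrict_of_not_affineFun (hf : ¬ AffineFun f) :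
    ∃ i w, OddWeight (binRestrict f i w) := by
  contrapose! hf
  refine affineFun_of_update (fun i => xor (f (update (fun _ => true) i false))
    (f (update (fun _ => true) i true))) fun i a => ?_
  have := hf i a
  simp only [OddWeight, binRestrict_false, binRestrict_true, Bool.not_eq_true] at this
  revert this
  cases f (update a i false) <;> cases f (update a i true) <;> simp

end Witnesses

section Constants

variable {B : ∀ n : ℕ, Set ((Fin n → Bool) → Bool)}

theorem inClone_true_of_not_selfDual (hn : InClone B 2 (binOp fun x _ => !x)) {n : ℕ}
    {f : (Fin n → Bool) → Bool} (hf : InClone B n f) (hD : ¬ SelfDual f) :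
    InClone B 2 (binOp fun _ _ => true) := by
  obtain ⟨a, ha⟩ : ∃ a, f (fun i => !a i) ≠ !f a := by simpa [SelfDual] using hD
  have hconst : (fun x (_ : Bool) => f fun k => xor x (!a k)) = fun _ _ => f a := by
    funext x _
    cases x
    · simpa using ha
    · simp
  have hc := hf.binOp_subst fun k => inClone_xor_fst hn (!a k)
  rw [hconst] at hc
  simpa using hc.xor_inputs_output hn false false (!f a)

theorem inClone_true_of_not_pres0_of_not_selfDual {n m : ℕ} {f₀ : (Fin n → Bool) → Bool}
    (hf₀ : InClone B n f₀) (hP : ¬ Pres0 f₀) {f₁ : (Fin m → Bool) → Bool}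
    (hf₁ : InClone B m f₁) (hD : ¬ SelfDual f₁) : InClone B 2 (binOp fun _ _ => true) := by
  have hdiag : InClone B 2 (binOp fun x _ => f₀ fun _ => x) :=
    hf₀.binOp_subst fun _ => inClone_fst
  have h0 : f₀ (fun _ => false) = true := by simpa [Pres0] using hP
  cases h1 : f₀ (fun _ => true)
  · have hnot : (fun x (_ : Bool) => f₀ fun _ => x) = fun x _ => !x := by
      funext x _
      cases x <;> simp [h0, h1]
    exact inClone_true_of_not_selfDual (hnot ▸ hdiag) hf₁ hD
  · have hconst : (fun x (_ : Bool) => f₀ fun _ => x) = fun _ _ => true := by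
      funext x _
      cases x <;> assumption
    exact hconst ▸ hdiag

end Constants

/-- A set `B` of Boolean functions generates a clone containing implication iff `B` is
not contained in any of the clones `P0` (0-preserving), `D` (self-dual), `A` (affine),
`M` (monotone). -/
theorem imp_in_clone_iff (B : ∀ n : ℕ, Set ((Fin n → Bool) → Bool)) :
    InClone B 2 impFun ↔
      ¬ ((∀ n, ∀ f ∈ B n, Pres0 f) ∨ (∀ n, ∀ f ∈ B n, SelfDual f) ∨
         (∀ n, ∀ f ∈ B n, AffineFun f) ∨ (∀ n, ∀ f ∈ B n, MonotoneFun f)) := by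
  constructor
  · rintro himp (hP | hD | hA | hM)
    · exact impFun_not_preserves_zero (himp.preserves fun _ f hf => (hP _ f hf).preserves)
    · exact impFun_not_preserves_neg (himp.preserves fun _ f hf => (hD _ f hf).preserves)
    · exact impFun_not_preserves_sum (himp.preserves fun _ f hf => (hA _ f hf).preserves)
    · exact impFun_not_preserves_le (himp.preserves fun _ f hf => (hM _ f hf).preserves)
  · intro h
    push Not at h
    obtain ⟨⟨_, f₀, hf₀, hP⟩, ⟨_, f₁, hf₁, hD⟩, ⟨_, f₂, hf₂, hA⟩, ⟨_, f₃, hf₃, hM⟩⟩ := h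
    have h1 := inClone_true_of_not_pres0_of_not_selfDual (.of hf₀) hP (.of hf₁) hD
    obtain ⟨i, w, hodd⟩ := exists_oddWeight_binRestrict_of_not_affineFun hA
    obtain ⟨j, a, ha₀, ha₁⟩ := exists_update_of_not_monotoneFun hM
    exact inClone_impFun_of_decreasing_of_oddWeight h1 ((InClone.of hf₃).binRestrict h1 j a)
      (by simpa using ha₀) (by simpa using ha₁) ((InClone.of hf₂).binRestrict h1 i w) hodd
end

section
/- The monotone fragment CPC↾_{∧,∨,⊤,⊥} of classical logic conservatively translates into LP: for the substitution σ with σ(p) = p ∧ ¬p for every variable p, we have Γ ⊢_{CPC} φ iff σ(Γ) ⊢_{LP} σ(φ), for all Γ, φ built from ∧, ∨, ⊤, ⊥. -/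
/-- A formula is monotone if it is built only from variables, `∧`, `∨`, `⊤`, `⊥`. -/
def KForm.IsMonotone : KForm → Prop
  | .var _ => True
  | .bot => True
  | .top => True
  | .neg _ => False
  | .and φ ψ => φ.IsMonotone ∧ ψ.IsMonotone
  | .or φ ψ => φ.IsMonotone ∧ ψ.IsMonotone

/-- The substitution `σ` replacing every variable `p` by `p ∧ ¬p`. -/
def sigma : KForm → KForm
  | .var n => .and (.var n) (.neg (.var n))
  | .bot => .bot
  | .top => .top
  | .neg φ => .neg (sigma φ)
  | .and φ ψ => .and (sigma φ) (sigma ψ)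
  | .or φ ψ => .or (sigma φ) (sigma ψ)

/-!
The value of `p ∧ ¬p` is designated in LP exactly when `p = *`. The collapse
`π : A3 → 𝟚` (`0 ↦ 0`, `*, 1 ↦ 1`) is a lattice homomorphism reflecting designation, so on a
monotone `φ` the LP-value of `σ(φ)` under `v` is designated iff `φ` is classically true under
`p ↦ [v p = *]`. Every Boolean valuation arises in this way, so the two consequence relations agree.
-/

def K3.toBool : K3 → Bool
  | .zero => false
  | .half => true
  | .one => true

namespace K3

@[simp]
lemma toBool_eq_true_iff (a : K3) : a.toBool = true ↔ a ≠ .zero := by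
  cases a <;> decide

@[simp]
lemma toBool_min (a b : K3) : (a.min b).toBool = (a.toBool && b.toBool) := by
  cases a <;> cases b <;> rfl

@[simp]
lemma toBool_max (a b : K3) : (a.max b).toBool = (a.toBool || b.toBool) := by
  cases a <;> cases b <;> rfl

lemma toBool_min_not (a : K3) : (a.min a.not).toBool = decide (a = .half) := by
  cases a <;> rfl

lemma surjective_decide_eq_half : Function.Surjective fun a : K3 => decide (a = .half) :=
  fun b => b.casesOn ⟨.zero, rfl⟩ ⟨.half, rfl⟩

end K3

namespace KForm

lemma eval3_sigma (v : ℕ → K3) (φ : KForm) :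
    (sigma φ).eval3 v = φ.eval3 fun n => (v n).min (v n).not := by
  induction φ with
  | var n => rfl
  | bot => rfl
  | top => rfl
  | neg φ ih => simp only [sigma, eval3, ih]
  | and φ ψ ihφ ihψ => simp only [sigma, eval3, ihφ, ihψ]
  | or φ ψ ihφ ihψ => simp only [sigma, eval3, ihφ, ihψ]

lemma toBool_eval3 {φ : KForm} (hφ : φ.IsMonotone) (v : ℕ → K3) :
    (φ.eval3 v).toBool = φ.evalB (K3.toBool ∘ v) := by
  induction φ with
  | var n => rfl
  | bot => rfl
  | top => rfl
  | neg φ _ => exact hφ.elim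
  | and φ ψ ihφ ihψ => simp only [eval3, evalB, K3.toBool_min, ihφ hφ.1, ihψ hφ.2]
  | or φ ψ ihφ ihψ => simp only [eval3, evalB, K3.toBool_max, ihφ hφ.1, ihψ hφ.2]

lemma eval3_sigma_ne_zero_iff {φ : KForm} (hφ : φ.IsMonotone) (v : ℕ → K3) :
    (sigma φ).eval3 v ≠ .zero ↔ φ.evalB (fun n => decide (v n = .half)) = true := by
  rw [← K3.toBool_eq_true_iff, eval3_sigma, toBool_eval3 hφ]
  simp only [Function.comp_def, K3.toBool_min_not]

end KForm

/-- The monotone fragment `CPC↾_{∧,∨,⊤,⊥}` conservatively translates into LP via the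
substitution `σ(p) = p ∧ ¬p`: for monotone `Γ, φ`, `Γ ⊢_CPC φ` iff `σ(Γ) ⊢_LP σ(φ)`. -/
theorem monotone_fragment_into_LP (Γ : Set KForm) (φ : KForm)
    (hΓ : ∀ ψ ∈ Γ, ψ.IsMonotone) (hφ : φ.IsMonotone) :
    CpcK Γ φ ↔ LPK (sigma '' Γ) (sigma φ) := by
  rw [CpcK, K3.surjective_decide_eq_half.comp_left.forall]
  refine forall_congr' fun v => ?_
  rw [Set.forall_mem_image, KForm.eval3_sigma_ne_zero_iff hφ]
  exact imp_congr_left <| forall₂_congr fun ψ hψ => (KForm.eval3_sigma_ne_zero_iff (hΓ ψ hψ) v).symm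
end

section
/- The implication fragment CPC↾_→ of classical logic is universal: the map sending φ(p⃗) (after renaming variables to free up a fresh variable q) to an implicational formula equivalent to φ ∨ q is a conservative translation from CPC to CPC↾_→. -/
/-- Purely implicational formulas. -/
inductive ImpForm : Type
  | var : ℕ → ImpForm
  | imp : ImpForm → ImpForm → ImpForm

/-- Boolean evaluation of implicational formulas. -/
def ImpForm.eval (v : ℕ → Bool) : ImpForm → Bool
  | .var n => v n
  | .imp φ ψ => !(φ.eval v) || ψ.eval v

/-- Consequence of the implication fragment `CPC↾_→`. -/
def CpcImp (Γ : Set ImpForm) (φ : ImpForm) : Prop :=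
  ∀ v : ℕ → Bool, (∀ ψ ∈ Γ, ψ.eval v = true) → φ.eval v = true

def trImp : PropForm → ImpForm
  | .var n => .imp (.imp (.var (n+1)) (.var 0)) (.var 0)
  | .bot => .var 0
  | .top => .imp (.var 0) (.var 0)
  | .neg φ => .imp (trImp φ) (.var 0)
  | .and φ ψ => .imp (.imp (trImp φ) (.imp (trImp ψ) (.var 0))) (.var 0)
  | .or φ ψ => .imp (.imp (trImp φ) (trImp ψ)) (trImp ψ)
  | .imp φ ψ => .imp (trImp φ) (trImp ψ)

lemma trImp_eval (φ : PropForm) (v : ℕ → Bool) :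
    (trImp φ).eval v = (φ.eval (fun n => v (n + 1)) || v 0) := by
  induction φ with
  | var n => simp [trImp, ImpForm.eval, PropForm.eval]; cases v (n+1) <;> cases v 0 <;> simp
  | bot => simp [trImp, ImpForm.eval, PropForm.eval]
  | top => simp [trImp, ImpForm.eval, PropForm.eval]
  | neg φ ih =>
      simp [trImp, ImpForm.eval, PropForm.eval, ih]
      cases φ.eval (fun n => v (n+1)) <;> cases v 0 <;> simp
  | and φ ψ ih1 ih2 =>
      simp [trImp, ImpForm.eval, PropForm.eval, ih1, ih2]
      cases φ.eval (fun n => v (n+1)) <;> cases ψ.eval (fun n => v (n+1)) <;> cases v 0 <;> simp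
  | or φ ψ ih1 ih2 =>
      simp [trImp, ImpForm.eval, PropForm.eval, ih1, ih2]
      cases φ.eval (fun n => v (n+1)) <;> cases ψ.eval (fun n => v (n+1)) <;> cases v 0 <;> simp
  | imp φ ψ ih1 ih2 =>
      simp [trImp, ImpForm.eval, PropForm.eval, ih1, ih2]
      cases φ.eval (fun n => v (n+1)) <;> cases ψ.eval (fun n => v (n+1)) <;> cases v 0 <;> simp

/-- The implication fragment of classical logic is universal: there is a map `f` sending
each formula `φ` (with variables renamed by `p_n ↦ p_{n+1}`, freeing up the variable
`q = p_0`) to an implicational formula equivalent to `φ ∨ q`, and any such map is a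
conservative translation of CPC into `CPC↾_→`. -/
theorem cpc_imp_fragment_universal :
    ∃ f : PropForm → ImpForm,
      (∀ (φ : PropForm) (v : ℕ → Bool),
        (f φ).eval v = (φ.eval (fun n => v (n + 1)) || v 0)) ∧
      (∀ (Γ : Set PropForm) (φ : PropForm), Cpc Γ φ ↔ CpcImp (f '' Γ) (f φ)) := by
  refine ⟨trImp, trImp_eval, fun Γ φ => ?_⟩
  constructor
  · intro h v hv
    rw [trImp_eval]
    cases hq : v 0 with
    | true => simp
    | false =>
      simp only [Bool.or_false]
      apply h
      intro ψ hψ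
      have := hv (trImp ψ) ⟨ψ, hψ, rfl⟩
      rw [trImp_eval, hq, Bool.or_false] at this
      exact this
  · intro h v hv
    set w : ℕ → Bool := fun n => Nat.rec false (fun m _ => v m) n with hw
    have hw0 : w 0 = false := rfl
    have hws : ∀ n, w (n + 1) = v n := fun n => rfl
    have := h w ?_
    · rw [trImp_eval] at this
      simpa [hw0, hws] using this
    · rintro _ ⟨ψ, hψ, rfl⟩
      rw [trImp_eval]
      simp [hw0, hws, hv ψ hψ]
end
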